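/- Let V ∈ H₊^{−m}. Then the m-sectorial operator S₊(V) associated with the form t₊[u,v] = ⟨D₊^{2m}u,v⟩₊ + ⟨Vu,v⟩₊ on H₊^m has domain Dom(S₊) = { u ∈ H₊^m : D₊^{2m}u + V·u ∈ L²(0,1) } and acts by S₊(V)u = D₊^{2m}u + V·u. -/
import Mathlib


/- STATEMENT 7 (first representation theorem, description of S₊(V)):
the m-sectorial operator S₊(V) associated with the form t₊ has
domain {u ∈ H₊^m : D₊^{2m}u + V·u ∈ L²} and acts as
S₊(V)u = D₊^{2m}u + V·u.  Model: L²(0,1) ≅ ℓ²(ℤ) via Fourier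
coefficients; by Kato's first representation theorem, "u ∈ Dom(S₊)
and S₊u = w" means u ∈ dom t₊ and t₊[u,v] = (w,v) for all v ∈ dom t₊;
the theorem states that this holds iff u ∈ H₊^m and the sequence
D₊^{2m}u + V·u equals the ℓ² element w. -/

noncomputable section
open Complex

abbrev E := lp (fun _ : ℤ => ℂ) 2

def wtp (s : ℝ) (k : ℤ) : ℝ := ((1 + |(2 * k : ℤ)| : ℝ)) ^ (2 * s)

def conv (a b : ℤ → ℂ) (k : ℤ) : ℂ := ∑' j : ℤ, a (k - j) * b j

def cplus (m : ℕ) (k : ℤ) : ℝ := (2 * Real.pi * (k : ℝ)) ^ (2 * m)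

def domt (m : ℕ) : Set E := {u | Summable fun k : ℤ => wtp (m : ℝ) k * ‖u k‖ ^ 2}

def tform (m : ℕ) (V : ℤ → ℂ) (u v : E) : ℂ :=
  (∑' k : ℤ, ((cplus m k : ℝ) : ℂ) * u k * (starRingEnd ℂ) (v k)) +
    ∑' k : ℤ, conv V (fun j => u j) k * (starRingEnd ℂ) (v k)

/-- The `L²(0,1)` inner product in Fourier coordinates. -/
def L2inner (w v : E) : ℂ := ∑' k : ℤ, w k * (starRingEnd ℂ) (v k)

lemma wtp_nat (m : ℕ) (k : ℤ) : wtp (m : ℝ) k = ((1 + |(2 * k : ℤ)| : ℝ)) ^ (2 * m) := by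
  rw [wtp, show (2 * (m:ℝ)) = ((2*m : ℕ) : ℝ) by push_cast; ring, Real.rpow_natCast]

lemma wtp_nonneg (m : ℕ) (k : ℤ) : 0 ≤ wtp (m : ℝ) k := by
  rw [wtp_nat]; positivity

lemma cplus_nonneg (m : ℕ) (k : ℤ) : 0 ≤ cplus m k := by
  rw [cplus, pow_mul]; positivity

lemma cplus_le (m : ℕ) (k : ℤ) : cplus m k ≤ Real.pi ^ (2*m) * wtp (m : ℝ) k := by
  rw [cplus, wtp_nat, ← mul_pow]
  calc (2 * Real.pi * (k : ℝ)) ^ (2 * m) = |2 * Real.pi * (k : ℝ)| ^ (2*m) :=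
        ((even_two_mul m).pow_abs _).symm
      _ ≤ (Real.pi * (1 + |(2 * k : ℤ)| : ℝ)) ^ (2*m) := by
        apply pow_le_pow_left₀ (abs_nonneg _)
        have h : (2 * Real.pi * (k:ℝ)) = Real.pi * ((2*k : ℤ) : ℝ) := by push_cast; ring
        rw [h, abs_mul, _root_.abs_of_nonneg Real.pi_nonneg]
        have : |((2*k:ℤ):ℝ)| ≤ 1 + |(2 * k : ℤ)| := by
          push_cast; linarith [abs_nonneg ((2*k : ℤ):ℝ)]
        exact mul_le_mul_of_nonneg_left this Real.pi_nonneg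

lemma summable_S1 (m : ℕ) (u v : E) (hu : u ∈ domt m) (hv : v ∈ domt m) :
    Summable fun k : ℤ => ((cplus m k : ℝ) : ℂ) * u k * (starRingEnd ℂ) (v k) := by
  apply Summable.of_norm_bounded
    (g := fun k => (Real.pi ^ (2*m) / 2) * (wtp (m:ℝ) k * ‖u k‖^2 + wtp (m:ℝ) k * ‖v k‖^2))
    (((hu.add hv).mul_left _))
  intro k
  have h1 := cplus_le m k
  have h2 : ‖u k‖ * ‖v k‖ ≤ (‖u k‖^2 + ‖v k‖^2)/2 := by
    nlinarith [sq_nonneg (‖u k‖ - ‖v k‖)]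
  have hn : ‖((cplus m k : ℝ) : ℂ) * u k * (starRingEnd ℂ) (v k)‖
      = cplus m k * (‖u k‖ * ‖v k‖) := by
    rw [norm_mul, norm_mul, RCLike.norm_conj, Complex.norm_real,
      Real.norm_eq_abs, _root_.abs_of_nonneg (cplus_nonneg m k), mul_assoc]
  rw [hn]
  calc cplus m k * (‖u k‖ * ‖v k‖)
      ≤ (Real.pi ^ (2*m) * wtp (m:ℝ) k) * ((‖u k‖^2 + ‖v k‖^2)/2) := by
        apply mul_le_mul h1 h2 (by positivity) (mul_nonneg (by positivity) (wtp_nonneg m k))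
    _ = (Real.pi ^ (2*m) / 2) * (wtp (m:ℝ) k * ‖u k‖^2 + wtp (m:ℝ) k * ‖v k‖^2) := by ring

lemma summable_S3 (w v : E) :
    Summable fun k : ℤ => w k * (starRingEnd ℂ) (v k) := by
  have := lp.summable_inner (𝕜 := ℂ) v w
  simpa [RCLike.inner_apply, mul_comm] using this

lemma single_mem_domt (m : ℕ) (k : ℤ) : lp.single 2 k (1:ℂ) ∈ domt m := by
  apply summable_of_ne_finset_zero (s := {k})
  intro j hj
  simp only [Finset.mem_singleton] at hj
  rw [lp.single_apply_ne 2 k _ hj]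
  simp

theorem domain_of_form_sum (m : ℕ) (hm : 1 ≤ m) (V : ℤ → ℂ)
    (hV : Summable fun k : ℤ => wtp (-(m : ℝ)) k * ‖V k‖ ^ 2) :
    ∀ u w : E,
      (u ∈ domt m ∧ ∀ v ∈ domt m, tform m V u v = L2inner w v) ↔
      (u ∈ domt m ∧ ∀ k : ℤ, w k = ((cplus m k : ℝ) : ℂ) * u k +
        conv V (fun j => u j) k) := by
  intro u w
  constructor
  · rintro ⟨hu, h⟩
    refine ⟨hu, fun k => ?_⟩
    have hk := h (lp.single 2 k (1:ℂ)) (single_mem_domt m k)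
    have e1 : ∀ (f : ℤ → ℂ),
        (∑' j : ℤ, f j * (starRingEnd ℂ) ((lp.single 2 k (1:ℂ) : E) j)) = f k := by
      intro f
      rw [tsum_eq_single k]
      · rw [lp.single_apply_self]; simp
      · intro j hj
        rw [lp.single_apply_ne 2 k _ hj]; simp
    rw [tform, e1, e1, L2inner, e1] at hk
    exact hk.symm
  · rintro ⟨hu, hw⟩
    refine ⟨hu, fun v hv => ?_⟩
    have hS1 := summable_S1 m u v hu hv
    have hS3 := summable_S3 w v
    have hS2 : Summable fun k : ℤ => conv V (fun j => u j) k * (starRingEnd ℂ) (v k) := by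
      have : (fun k : ℤ => conv V (fun j => u j) k * (starRingEnd ℂ) (v k)) =
          fun k => w k * (starRingEnd ℂ) (v k) -
            ((cplus m k : ℝ) : ℂ) * u k * (starRingEnd ℂ) (v k) := by
        funext k; rw [hw k]; ring
      rw [this]
      exact hS3.sub hS1
    rw [tform, L2inner]
    have : (fun k : ℤ => w k * (starRingEnd ℂ) (v k)) =
        fun k => ((cplus m k : ℝ) : ℂ) * u k * (starRingEnd ℂ) (v k) +
          conv V (fun j => u j) k * (starRingEnd ℂ) (v k) := by
      funext k; rw [hw k]; ring
    rw [this, Summable.tsum_add hS1 hS2]
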